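/- For every positive integer k, the smallest eigenvalue μ of the graph H_k satisfies μ < −√(k/2), where H_k consists of a clique on 2k vertices together with one additional vertex adjacent to exactly k of the clique's vertices. -/

import Mathlib

/-!
Rayleigh quotient argument. For the vector `t` equal to `1` on `X`, `-1` on `Y` and `-2s` at `x₀`,
where `s = √(k/2)`, one computes `tᵀAt = -2k - 4ks` and `tᵀt = 4k`, so `tᵀ(A + sI)t = -2k < 0`.
Hence `A + sI` is not positive semidefinite, and `A` has an eigenvalue below `-s`.
-/

/-- The graph `H k`: a clique on `2k` vertices (indices `< 2k`), together with one extra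
vertex (index `2k`) joined to exactly the first `k` vertices of the clique. -/
def Hgraph (k : ℕ) : SimpleGraph (Fin (2 * k + 1)) where
  Adj i j := i ≠ j ∧ ((i.val < 2 * k ∧ j.val < 2 * k) ∨ (i.val = 2 * k ∧ j.val < k) ∨
      (j.val = 2 * k ∧ i.val < k))
  symm := by
    constructor
    intro i j h
    exact ⟨h.1.symm, by tauto⟩
  loopless := by
    constructor
    intro i h
    exact h.1 rfl

instance (k : ℕ) : DecidableRel (Hgraph k).Adj := fun i j =>
  decidable_of_iff (i ≠ j ∧ ((i.val < 2 * k ∧ j.val < 2 * k) ∨ (i.val = 2 * k ∧ j.val < k) ∨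
      (j.val = 2 * k ∧ i.val < k))) Iff.rfl

open Matrix

theorem Matrix.IsHermitian.exists_eigenvalue_lt_of_dotProduct_mulVec_lt {n : Type*} [Fintype n]
    [DecidableEq n] {A : Matrix n n ℝ} (hA : A.IsHermitian) {c : ℝ} (x : n → ℝ)
    (hx : x ⬝ᵥ A *ᵥ x < c * (x ⬝ᵥ x)) :
    ∃ ν : ℝ, ∃ v : n → ℝ, v ≠ 0 ∧ A *ᵥ v = ν • v ∧ ν < c := by
  set B := A - c • (1 : Matrix n n ℝ)
  have hB : B.IsHermitian := hA.sub (isHermitian_one.smul (IsSelfAdjoint.all c))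
  have hBv (v : n → ℝ) : B *ᵥ v = A *ᵥ v - c • v := by
    simp [B, sub_mulVec, smul_mulVec]
  have hxB : x ⬝ᵥ B *ᵥ x < 0 := by
    rw [hBv, dotProduct_sub, dotProduct_smul, smul_eq_mul]
    linarith
  obtain ⟨i, hi⟩ : ∃ i, hB.eigenvalues i < 0 := by
    by_contra! hnonneg
    have := (hB.posSemidef_iff_eigenvalues_nonneg.mpr hnonneg).dotProduct_mulVec_nonneg x
    rw [star_trivial] at this
    linarith
  refine ⟨hB.eigenvalues i + c, _, (WithLp.ofLp_eq_zero 2).ne.2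
    (hB.eigenvectorBasis.orthonormal.ne_zero i), ?_, by linarith⟩
  have := hB.mulVec_eigenvectorBasis i
  rw [hBv, sub_eq_iff_eq_add] at this
  rw [this, add_smul]

namespace Hgraph

def blockVec (k : ℕ) (a b c : ℝ) : Fin (2 * k + 1) → ℝ :=
  fun i => if i.val < k then a else if i.val < 2 * k then b else c

theorem sum_blockVec (k : ℕ) (a b c : ℝ) : ∑ i, blockVec k a b c i = k * a + k * b + c := by
  unfold blockVec
  rw [Fin.sum_univ_eq_sum_range (fun i => if i < k then a else if i < 2 * k then b else c),
    Finset.sum_range_succ, two_mul, Finset.sum_range_add]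
  have hX : ∀ i ∈ Finset.range k, (if i < k then a else if i < k + k then b else c) = a :=
    fun i hi => if_pos (Finset.mem_range.mp hi)
  have hY : ∀ i ∈ Finset.range k, (if k + i < k then a else if k + i < k + k then b else c) = b :=
    fun i hi => by have := Finset.mem_range.mp hi; rw [if_neg (by omega), if_pos (by omega)]
  rw [Finset.sum_congr rfl hX, Finset.sum_congr rfl hY]
  simp

theorem blockVec_dotProduct_blockVec (k : ℕ) (a b c a' b' c' : ℝ) :
    blockVec k a b c ⬝ᵥ blockVec k a' b' c' = k * (a * a') + k * (b * b') + c * c' := by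
  rw [dotProduct, ← sum_blockVec]
  congr! 1 with i
  unfold blockVec
  split_ifs <;> rfl

theorem adjMatrix_mulVec_blockVec (k : ℕ) (a b c : ℝ) :
    (Hgraph k).adjMatrix ℝ *ᵥ blockVec k a b c
      = blockVec k ((k - 1) * a + k * b + c) (k * a + (k - 1) * b) (k * a) := by
  funext i
  rw [SimpleGraph.adjMatrix_mulVec_apply, SimpleGraph.neighborFinset_eq_filter, Finset.sum_filter]
  rcases lt_or_ge i.val k with hX | hX
  · have row (j) : (if (Hgraph k).Adj i j then blockVec k a b c j else 0)
        = blockVec k a b c j - if i = j then a else 0 := by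
      simp only [Hgraph, blockVec, ne_eq, Fin.ext_iff]
      split_ifs <;> (try simp) <;> omega
    rw [Finset.sum_congr rfl fun j _ => row j, Finset.sum_sub_distrib, sum_blockVec,
      Finset.sum_ite_eq, if_pos (Finset.mem_univ i)]
    simp only [blockVec, if_pos hX]
    ring
  rcases lt_or_ge i.val (2 * k) with hY | hY
  · have row (j) : (if (Hgraph k).Adj i j then blockVec k a b c j else 0)
        = blockVec k a b 0 j - if i = j then b else 0 := by
      simp only [Hgraph, blockVec, ne_eq, Fin.ext_iff]
      split_ifs <;> (try simp) <;> omega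
    rw [Finset.sum_congr rfl fun j _ => row j, Finset.sum_sub_distrib, sum_blockVec,
      Finset.sum_ite_eq, if_pos (Finset.mem_univ i)]
    simp only [blockVec, if_neg hX.not_gt, if_pos hY]
    ring
  · have row (j) : (if (Hgraph k).Adj i j then blockVec k a b c j else 0)
        = blockVec k a 0 0 j := by
      simp only [Hgraph, blockVec, ne_eq, Fin.ext_iff]
      split_ifs <;> (try simp) <;> omega
    rw [Finset.sum_congr rfl fun j _ => row j, sum_blockVec]
    simp only [blockVec, if_neg hX.not_gt, if_neg hY.not_gt]
    ring

end Hgraph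

theorem smallest_eigenvalue_Hgraph (k : ℕ) (hk : 1 ≤ k) (μ : ℝ)
    (hmin : ∀ (μ' : ℝ) (v : Fin (2 * k + 1) → ℝ), v ≠ 0 →
      ((Hgraph k).adjMatrix ℝ).mulVec v = μ' • v → μ ≤ μ') :
    μ < -Real.sqrt (k / 2) := by
  set s := Real.sqrt (k / 2)
  have hs : s ^ 2 = k / 2 := Real.sq_sqrt (by positivity)
  have hk' : (1 : ℝ) ≤ k := by exact_mod_cast hk
  -- `-2s` is the weight at `x₀` that minimises the Rayleigh quotient over the vectors `(1, -1, c)`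
  obtain ⟨ν, v, hv, hAv, hν⟩ :=
    ((Hgraph k).isHermitian_adjMatrix ℝ).exists_eigenvalue_lt_of_dotProduct_mulVec_lt
      (c := -s) (Hgraph.blockVec k 1 (-1) (-2 * s)) (by
        rw [Hgraph.adjMatrix_mulVec_blockVec, Hgraph.blockVec_dotProduct_blockVec,
          Hgraph.blockVec_dotProduct_blockVec]
        linear_combination (4 * s) * hs + 2 * hk')
  exact (hmin ν v hv hAv).trans_lt hν
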